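/- arXiv:1705.07124 — 2 statements merged into one kernel-verified Lean document; each statement's English description precedes it below -/
import Mathlib

section
/- Let H be a finite-dimensional (nontrivial) complex Hilbert space and T, S ∈ B(H). Then T is strongly Birkhoff–James orthogonal to S (i.e. ∥T + S∘A∥ ≥ ∥T∥ for every A ∈ B(H)) if and only if there exists a unit vector ξ ∈ H such that |T|ξ = ∥T∥ξ and S*Tξ = 0. -/
/-!
Testing strong orthogonality against `A = -t • S† T` shows that a unit vector `ζ` norming
`T - t • S S† T` satisfies `‖T‖² - ‖T ζ‖² + 2t ‖S† T ζ‖² ≤ t² ‖S S† T‖²`; by compactness of the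
unit sphere, a minimiser of `‖T‖² - ‖T ξ‖² + ‖S† T ξ‖²` then norms `T` and has `S† T ξ = 0`.
Conversely, `S† T ξ = 0` says that `T ξ` is orthogonal to the range of `S`, so
`‖(T + S A) ξ‖ ≥ ‖T ξ‖ = ‖T‖`. Finally, unit vectors norming `T` are exactly those with
`|T| ξ = ‖T‖ ξ`: for `Q = √|T|`, equality in `‖|T| ξ‖ ≤ ‖Q‖ ‖Q ξ‖ ≤ ‖Q‖² ‖ξ‖` forces equality in
Cauchy–Schwarz for `⟪Q† Q ξ, ξ⟫`.
-/

open ContinuousLinearMap Filter Topology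

theorem ContinuousLinearMap.exists_norm_eq_one_and_norm_apply_eq_opNorm {𝕜 E F : Type*}
    [RCLike 𝕜] [NormedAddCommGroup E] [NormedSpace 𝕜 E] [FiniteDimensional 𝕜 E] [Nontrivial E]
    [NormedAddCommGroup F] [NormedSpace 𝕜 F] (f : E →L[𝕜] F) : ∃ x, ‖x‖ = 1 ∧ ‖f x‖ = ‖f‖ := by
  have := FiniteDimensional.proper_rclike 𝕜 E
  obtain ⟨x, hx, hfx⟩ := (isCompact_sphere (0 : E) 1).exists_sSup_image_eq
    (Set.nonempty_coe_sort.1 (NormedSpace.sphere_nonempty_rclike 𝕜 zero_le_one))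
    (by fun_prop : Continuous fun x => ‖f x‖).continuousOn
  exact ⟨x, by simpa using hx, by rw [← hfx, f.sSup_sphere_eq_norm]⟩

section Orthogonality

variable {𝕜 E F G : Type*} [RCLike 𝕜] [NormedAddCommGroup E] [NormedSpace 𝕜 E]
  [NormedAddCommGroup F] [InnerProductSpace 𝕜 F] [CompleteSpace F]
  [NormedAddCommGroup G] [InnerProductSpace 𝕜 G] [CompleteSpace G]

theorem ContinuousLinearMap.norm_sub_smul_apply_adjoint_apply_sq (S : G →L[𝕜] F) (y : F)
    (t : ℝ) :
    ‖y - (t : 𝕜) • S (adjoint S y)‖ ^ 2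
      = ‖y‖ ^ 2 - 2 * t * ‖adjoint S y‖ ^ 2 + t ^ 2 * ‖S (adjoint S y)‖ ^ 2 := by
  rw [@norm_sub_sq 𝕜, inner_smul_right, ← adjoint_inner_left, inner_self_eq_norm_sq_to_K,
    norm_smul, RCLike.norm_ofReal, mul_pow, sq_abs]
  norm_cast
  ring

def IsStronglyBJOrthogonal (T : E →L[𝕜] F) (S : G →L[𝕜] F) : Prop :=
  ∀ A : E →L[𝕜] G, ‖T‖ ≤ ‖T + S ∘L A‖

theorem isStronglyBJOrthogonal_of_adjoint_apply_eq_zero {T : E →L[𝕜] F} {S : G →L[𝕜] F}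
    {ξ : E} (hξ : ‖ξ‖ ≤ 1) (hTξ : ‖T ξ‖ = ‖T‖) (hS : adjoint S (T ξ) = 0) :
    IsStronglyBJOrthogonal T S := by
  intro A
  have hmin := (S.forall_norm_sub_apply_le_iff_adjoint_apply_sub_eq_zero (T ξ) 0).2
    (by simpa using hS)
  calc ‖T‖ = ‖T ξ - S 0‖ := by simp [hTξ]
    _ ≤ ‖T ξ - S (-A ξ)‖ := hmin _
    _ = ‖(T + S ∘L A) ξ‖ := by simp [sub_eq_add_neg]
    _ ≤ ‖T + S ∘L A‖ := by simpa using (T + S ∘L A).le_opNorm_of_le hξ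

theorem IsStronglyBJOrthogonal.exists_almost_norming_almost_orthogonal [FiniteDimensional 𝕜 E]
    [Nontrivial E] {T : E →L[𝕜] F} {S : G →L[𝕜] F} (h : IsStronglyBJOrthogonal T S) (t : ℝ) :
    ∃ ζ : E, ‖ζ‖ = 1 ∧
      ‖T‖ ^ 2 - ‖T ζ‖ ^ 2 + 2 * t * ‖adjoint S (T ζ)‖ ^ 2 ≤
        t ^ 2 * ‖S ∘L adjoint S ∘L T‖ ^ 2 := by
  set B := S ∘L adjoint S ∘L T
  obtain ⟨ζ, hζ, hnorm⟩ := (T - (t : 𝕜) • B).exists_norm_eq_one_and_norm_apply_eq_opNorm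
  refine ⟨ζ, hζ, ?_⟩
  have hT : ‖T‖ ≤ ‖T ζ - (t : 𝕜) • S (adjoint S (T ζ))‖ := by
    have hA : T + S ∘L (-(t : 𝕜) • (adjoint S ∘L T)) = T - (t : 𝕜) • B := by
      rw [comp_smul, neg_smul, ← sub_eq_add_neg]
    calc ‖T‖ ≤ ‖T - (t : 𝕜) • B‖ := hA ▸ h _
      _ = ‖T ζ - (t : 𝕜) • S (adjoint S (T ζ))‖ := hnorm.symm
  have hB : ‖S (adjoint S (T ζ))‖ ≤ ‖B‖ := (B.le_opNorm_of_le hζ.le).trans_eq (mul_one _)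
  have := S.norm_sub_smul_apply_adjoint_apply_sq (T ζ) t
  nlinarith [pow_le_pow_left₀ (norm_nonneg _) hT 2, pow_le_pow_left₀ (norm_nonneg _) hB 2]

theorem IsStronglyBJOrthogonal.exists_norming_adjoint_apply_eq_zero [FiniteDimensional 𝕜 E]
    [Nontrivial E] {T : E →L[𝕜] F} {S : G →L[𝕜] F} (h : IsStronglyBJOrthogonal T S) :
    ∃ ξ : E, ‖ξ‖ = 1 ∧ ‖T ξ‖ = ‖T‖ ∧ adjoint S (T ξ) = 0 := by
  have := FiniteDimensional.proper_rclike 𝕜 E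
  set c := ‖S ∘L adjoint S ∘L T‖ ^ 2
  set f : E → ℝ := fun ξ => ‖T‖ ^ 2 - ‖T ξ‖ ^ 2 + ‖adjoint S (T ξ)‖ ^ 2
  obtain ⟨ξ, hξ, hmin⟩ := (isCompact_sphere (0 : E) 1).exists_isMinOn
    (Set.nonempty_coe_sort.1 (NormedSpace.sphere_nonempty_rclike 𝕜 zero_le_one))
    (by fun_prop : Continuous f).continuousOn
  have hξ1 : ‖ξ‖ = 1 := by simpa using hξ
  have hsmall : ∀ t ∈ Set.Ioc (0 : ℝ) 1, f ξ ≤ t * c := by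
    rintro t ⟨ht0, ht1⟩
    obtain ⟨ζ, hζ, hζt⟩ := h.exists_almost_norming_almost_orthogonal t
    have hfζ : f ξ ≤ f ζ := hmin (by simpa using hζ)
    have hTζ : ‖T ζ‖ ≤ ‖T‖ := (T.le_opNorm_of_le hζ.le).trans_eq (mul_one _)
    -- for `t ≤ 1` the weighted defect of `ζ` bounds `t * f ζ`
    have : t * f ζ ≤ t * (t * c) := by
      simp only [f]
      nlinarith [pow_le_pow_left₀ (norm_nonneg _) hTζ 2, sq_nonneg ‖adjoint S (T ζ)‖]
    nlinarith [le_of_mul_le_mul_left this ht0]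
  have hf : f ξ ≤ 0 := by
    refine ge_of_tendsto (?_ : Tendsto (fun t : ℝ => t * c) (𝓝[>] 0) (𝓝 0)) ?_
    · exact ((continuous_id.mul continuous_const).tendsto' 0 0 (zero_mul c)).mono_left
        nhdsWithin_le_nhds
    · filter_upwards [Ioc_mem_nhdsGT zero_lt_one] with t ht using hsmall t ht
  have hTξ := pow_le_pow_left₀ (norm_nonneg _) ((T.le_opNorm_of_le hξ1.le).trans_eq (mul_one _)) 2
  have hnorming : ‖T ξ‖ ^ 2 = ‖T‖ ^ 2 := by nlinarith [sq_nonneg ‖adjoint S (T ξ)‖]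
  have horth : ‖adjoint S (T ξ)‖ ^ 2 = 0 := by nlinarith [sq_nonneg ‖adjoint S (T ξ)‖]
  exact ⟨ξ, hξ1, (sq_eq_sq₀ (norm_nonneg _) (norm_nonneg _)).1 hnorming, by simpa using horth⟩

theorem isStronglyBJOrthogonal_iff_exists_norming_adjoint_apply_eq_zero [FiniteDimensional 𝕜 E]
    [Nontrivial E] {T : E →L[𝕜] F} {S : G →L[𝕜] F} :
    IsStronglyBJOrthogonal T S ↔ ∃ ξ : E, ‖ξ‖ = 1 ∧ ‖T ξ‖ = ‖T‖ ∧ adjoint S (T ξ) = 0 :=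
  ⟨IsStronglyBJOrthogonal.exists_norming_adjoint_apply_eq_zero, fun ⟨_, hξ, hTξ, hS⟩ =>
    isStronglyBJOrthogonal_of_adjoint_apply_eq_zero hξ.le hTξ hS⟩

end Orthogonality

theorem ContinuousLinearMap.adjoint_comp_self_apply_of_norm_apply_eq {𝕜 E F : Type*} [RCLike 𝕜]
    [NormedAddCommGroup E] [InnerProductSpace 𝕜 E] [CompleteSpace E]
    [NormedAddCommGroup F] [InnerProductSpace 𝕜 F] [CompleteSpace F] (T : E →L[𝕜] F) {x : E}
    (h : ‖T x‖ = ‖T‖ * ‖x‖) : (adjoint T ∘L T) x = ((‖T‖ ^ 2 : ℝ) : 𝕜) • x := by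
  set y := (adjoint T ∘L T) x
  have hre : RCLike.re (inner 𝕜 y x) = ‖T‖ ^ 2 * ‖x‖ ^ 2 := by
    rw [← apply_norm_sq_eq_inner_adjoint_left, h, mul_pow]
  have hy : ‖y‖ ≤ ‖T‖ ^ 2 * ‖x‖ := by
    rw [sq, ← norm_adjoint_comp_self]
    exact le_opNorm _ _
  have : ‖y - ((‖T‖ ^ 2 : ℝ) : 𝕜) • x‖ ^ 2 ≤ 0 := by
    rw [@norm_sub_sq 𝕜, inner_smul_right, RCLike.re_ofReal_mul, hre, norm_smul,
      RCLike.norm_ofReal, abs_sq]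
    nlinarith [pow_le_pow_left₀ (norm_nonneg _) hy 2]
  rw [← sub_eq_zero, ← norm_eq_zero]
  exact pow_eq_zero_iff two_ne_zero |>.1 (le_antisymm this (sq_nonneg _))

section Abs

variable {H : Type*} [NormedAddCommGroup H] [InnerProductSpace ℂ H] [CompleteSpace H]

theorem ContinuousLinearMap.apply_eq_opNorm_smul_of_nonneg {P : H →L[ℂ] H} (hP : 0 ≤ P) {x : H}
    (h : ‖P x‖ = ‖P‖ * ‖x‖) : P x = ‖P‖ • x := by
  set Q := CFC.sqrt P
  have hQQ : Q * Q = P := CFC.sqrt_mul_sqrt_self P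
  have hQ'Q : adjoint Q ∘L Q = P := by
    rw [← star_eq_adjoint, (CFC.sqrt_nonneg P).isSelfAdjoint.star_eq, ← mul_def, hQQ]
  have hQ : ‖Q‖ ^ 2 = ‖P‖ := by rw [sq, ← norm_adjoint_comp_self, hQ'Q]
  have hQx : ‖Q x‖ = ‖Q‖ * ‖x‖ := by
    refine le_antisymm (Q.le_opNorm x) ?_
    rcases (norm_nonneg Q).eq_or_lt' with hQ0 | hQpos
    · simp [hQ0]
    · refine le_of_mul_le_mul_left ?_ hQpos
      calc ‖Q‖ * (‖Q‖ * ‖x‖) = ‖Q (Q x)‖ := by rw [← mul_assoc, ← sq, hQ, ← h, ← hQQ]; rfl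
        _ ≤ ‖Q‖ * ‖Q x‖ := Q.le_opNorm (Q x)
  have := Q.adjoint_comp_self_apply_of_norm_apply_eq hQx
  rwa [hQ'Q, hQ, ← RCLike.real_smul_eq_coe_smul] at this

theorem CFC.norm_abs_apply (T : H →L[ℂ] H) (x : H) : ‖CFC.abs T x‖ = ‖T x‖ := by
  have h : adjoint (CFC.abs T) ∘L CFC.abs T = adjoint T ∘L T := by
    simp only [← star_eq_adjoint, ← mul_def, (CFC.abs_nonneg T).isSelfAdjoint.star_eq,
      CFC.abs_mul_abs]
  rw [← sq_eq_sq₀ (norm_nonneg _) (norm_nonneg _), apply_norm_sq_eq_inner_adjoint_left, h,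
    apply_norm_sq_eq_inner_adjoint_left]

theorem CFC.abs_apply_eq_opNorm_smul_iff (T : H →L[ℂ] H) (x : H) :
    CFC.abs T x = ‖T‖ • x ↔ ‖T x‖ = ‖T‖ * ‖x‖ := by
  refine ⟨fun h => ?_, fun h => ?_⟩
  · rw [← CFC.norm_abs_apply, h, norm_smul, norm_norm]
  · rw [← CFC.norm_abs (a := T)] at h ⊢
    exact apply_eq_opNorm_smul_of_nonneg (CFC.abs_nonneg T) (by rwa [CFC.norm_abs_apply])

end Abs

/-- On a finite-dimensional nontrivial complex Hilbert space `H`, `T` is strongly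
Birkhoff–James orthogonal to `S` iff there is a unit vector `ξ` with `|T|ξ = ‖T‖ξ` and
`S*Tξ = 0`. -/
theorem strong_birkhoff_orthogonal_iff_exists_unit_vector_finiteDimensional
    {H : Type*} [NormedAddCommGroup H] [InnerProductSpace ℂ H]
    [FiniteDimensional ℂ H] [Nontrivial H] (T S : H →L[ℂ] H) :
    (∀ A : H →L[ℂ] H, ‖T‖ ≤ ‖T + S ∘L A‖) ↔
      ∃ ξ : H, ‖ξ‖ = 1 ∧ CFC.sqrt (star T * T) ξ = ‖T‖ • ξ ∧
        ContinuousLinearMap.adjoint S (T ξ) = 0 := by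
  refine isStronglyBJOrthogonal_iff_exists_norming_adjoint_apply_eq_zero.trans
    (exists_congr fun ξ => and_congr_right fun hξ => and_congr_left' ?_)
  change _ ↔ CFC.abs T ξ = _
  rw [CFC.abs_apply_eq_opNorm_smul_iff, hξ, mul_one]
end

section
/- Let H be a nontrivial complex Hilbert space and T, S ∈ B(H) with m(S) > 0, where m(S) = inf{∥Sξ∥ : ξ ∈ H, ∥ξ∥ = 1}. Then there exists a unique γ ∈ ℂ such that ∥(T + γS) + λS∥² ≥ ∥T + γS∥² + |λ|²·m(S)² for every λ ∈ ℂ. -/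
/-!
Among the translates `T + γS` take one of minimal norm; it exists because
`‖T + γS‖ ≥ |γ| ‖S‖ - ‖T‖ → ∞`, and minimality says that `A = T + γS` is Birkhoff–James
orthogonal to `S`. In a Hilbert space, for real `t` the identity
`‖x + ty‖² = (1 - t)‖x‖² + t‖x + y‖² - t(1 - t)‖y‖²` applied pointwise with `y = λSξ` gives
`‖A‖² ≤ ‖A + tλS‖² ≤ (1 - t)‖A‖² + t‖A + λS‖² - t(1 - t)|λ|²m²`; dividing by `t` and letting
`t → 0⁺` yields `‖A‖² + |λ|²m² ≤ ‖A + λS‖²`. Two such translates `γ₁, γ₂` satisfy this inequality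
in both directions, which forces `|γ₁ - γ₂|²m² ≤ 0`.
-/

open Filter RCLike

def BirkhoffJamesOrthogonal (𝕜 : Type*) {V : Type*} [Norm V] [Add V] [SMul 𝕜 V] (x y : V) :
    Prop :=
  ∀ μ : 𝕜, ‖x‖ ≤ ‖x + μ • y‖

section Normed

variable {𝕜 V : Type*} [NormedField 𝕜] [SeminormedAddCommGroup V] [Module 𝕜 V]

theorem BirkhoffJamesOrthogonal.smul_right {x y : V} (h : BirkhoffJamesOrthogonal 𝕜 x y)
    (a : 𝕜) : BirkhoffJamesOrthogonal 𝕜 x (a • y) := fun μ => by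
  simpa only [smul_smul] using h (μ * a)

theorem eq_of_forall_sq_norm_add_smul_le {T S : V} {m : ℝ} (hm : m ≠ 0) {γ₁ γ₂ : 𝕜}
    (h₁ : ∀ lam : 𝕜, ‖T + γ₁ • S‖ ^ 2 + ‖lam‖ ^ 2 * m ^ 2 ≤ ‖T + γ₁ • S + lam • S‖ ^ 2)
    (h₂ : ∀ lam : 𝕜, ‖T + γ₂ • S‖ ^ 2 + ‖lam‖ ^ 2 * m ^ 2 ≤ ‖T + γ₂ • S + lam • S‖ ^ 2) :
    γ₁ = γ₂ := by
  have e₁ := h₁ (γ₂ - γ₁)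
  have e₂ := h₂ (γ₁ - γ₂)
  rw [add_assoc, ← add_smul, add_sub_cancel] at e₁ e₂
  rw [norm_sub_rev] at e₂
  by_contra hne
  have : 0 < ‖γ₂ - γ₁‖ ^ 2 * m ^ 2 := by
    have := norm_pos_iff.2 (sub_ne_zero.2 (Ne.symm hne))
    positivity
  linarith

end Normed

section Minimizer

variable {𝕜 V : Type*} [NormedField 𝕜] [ProperSpace 𝕜] [NormedAddCommGroup V] [NormedSpace 𝕜 V]

theorem tendsto_norm_add_smul_cocompact (T : V) {S : V} (hS : S ≠ 0) :
    Tendsto (fun γ : 𝕜 => ‖T + γ • S‖) (cocompact 𝕜) atTop := by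
  refine tendsto_atTop_mono (fun γ => ?_) (tendsto_atTop_add_const_right _ (-‖T‖)
    (tendsto_norm_cocompact_atTop.atTop_mul_const (norm_pos_iff.2 hS)))
  calc ‖γ‖ * ‖S‖ + -‖T‖ = ‖T + γ • S - T‖ - ‖T‖ := by rw [add_sub_cancel_left, norm_smul]; ring
    _ ≤ ‖T + γ • S‖ := by linarith [norm_sub_le (T + γ • S) T]

theorem exists_birkhoffJamesOrthogonal_add_smul (T : V) {S : V} (hS : S ≠ 0) :
    ∃ γ : 𝕜, BirkhoffJamesOrthogonal 𝕜 (T + γ • S) S := by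
  obtain ⟨γ, hγ⟩ := (by fun_prop : Continuous fun γ : 𝕜 => ‖T + γ • S‖).exists_forall_le
    (tendsto_norm_add_smul_cocompact T hS)
  exact ⟨γ, fun μ => by simpa only [add_assoc, add_smul] using hγ (γ + μ)⟩

end Minimizer

section InnerProduct

variable {𝕜 E F : Type*} [RCLike 𝕜] [NormedAddCommGroup F] [NormedSpace 𝕜 F]

theorem iInf_norm_apply_mul_norm_le [SeminormedAddCommGroup E] [NormedSpace 𝕜 E]
    (S : F →L[𝕜] E) (ξ : F) : (⨅ u : {u : F // ‖u‖ = 1}, ‖S u.1‖) * ‖ξ‖ ≤ ‖S ξ‖ := by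
  rcases eq_or_ne ξ 0 with rfl | hξ
  · simp
  have hle := ciInf_le (f := fun u : {u : F // ‖u‖ = 1} => ‖S u.1‖)
    ⟨0, by rintro _ ⟨u, rfl⟩; positivity⟩
    (⟨(‖ξ‖⁻¹ : 𝕜) • ξ, norm_smul_inv_norm hξ⟩ : {u : F // ‖u‖ = 1})
  rwa [map_smul, norm_smul, norm_inv, norm_ofReal, abs_norm,
    le_inv_mul_iff₀' (norm_pos_iff.2 hξ)] at hle

theorem ContinuousLinearMap.sq_opNorm_le_of_forall [SeminormedAddCommGroup E] [NormedSpace 𝕜 E]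
    [Nontrivial F] (f : F →L[𝕜] E) {C : ℝ} (h : ∀ ξ, ‖f ξ‖ ^ 2 ≤ C * ‖ξ‖ ^ 2) : ‖f‖ ^ 2 ≤ C := by
  obtain ⟨ξ, hξ⟩ := exists_ne (0 : F)
  have hC : 0 ≤ C :=
    nonneg_of_mul_nonneg_left ((sq_nonneg _).trans (h ξ)) (pow_pos (norm_pos_iff.2 hξ) 2)
  have hf : ‖f‖ ≤ √C := f.opNorm_le_bound (Real.sqrt_nonneg C) fun ξ => by
    rw [← Real.sqrt_sq (norm_nonneg (f ξ)), ← Real.sqrt_sq (norm_nonneg ξ), ← Real.sqrt_mul hC]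
    exact Real.sqrt_le_sqrt (h ξ)
  simpa [Real.sq_sqrt hC] using pow_le_pow_left₀ (norm_nonneg f) hf 2

variable [NormedAddCommGroup E] [InnerProductSpace 𝕜 E]

theorem norm_add_ofReal_smul_sq (x y : E) (t : ℝ) :
    ‖x + (t : 𝕜) • y‖ ^ 2 = (1 - t) * ‖x‖ ^ 2 + t * ‖x + y‖ ^ 2 - t * (1 - t) * ‖y‖ ^ 2 := by
  rw [norm_add_sq (𝕜 := 𝕜), norm_add_sq (𝕜 := 𝕜), inner_smul_right, re_ofReal_mul, norm_smul,
    norm_ofReal, mul_pow, sq_abs]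
  ring

theorem ContinuousLinearMap.sq_norm_add_ofReal_smul_le [Nontrivial F] (A : F →L[𝕜] E)
    {R : F →L[𝕜] E} {c : ℝ} (hc : 0 ≤ c) (hR : ∀ ξ, c * ‖ξ‖ ≤ ‖R ξ‖) {t : ℝ} (ht₀ : 0 ≤ t)
    (ht₁ : t ≤ 1) :
    ‖A + (t : 𝕜) • R‖ ^ 2 ≤ (1 - t) * ‖A‖ ^ 2 + t * ‖A + R‖ ^ 2 - t * (1 - t) * c ^ 2 := by
  refine (A + (t : 𝕜) • R).sq_opNorm_le_of_forall fun ξ => ?_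
  have hA := pow_le_pow_left₀ (norm_nonneg _) (A.le_opNorm ξ) 2
  have hAR := pow_le_pow_left₀ (norm_nonneg _) ((A + R).le_opNorm ξ) 2
  have hRξ := pow_le_pow_left₀ (by positivity) (hR ξ) 2
  rw [add_apply] at hAR
  rw [mul_pow] at hA hAR hRξ
  rw [add_apply, smul_apply, norm_add_ofReal_smul_sq]
  have hts : 0 ≤ t * (1 - t) := mul_nonneg ht₀ (sub_nonneg.2 ht₁)
  linarith [mul_le_mul_of_nonneg_left hA (sub_nonneg.2 ht₁), mul_le_mul_of_nonneg_left hAR ht₀,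
    mul_le_mul_of_nonneg_left hRξ hts]

theorem BirkhoffJamesOrthogonal.sq_norm_add_le [Nontrivial F] {A R : F →L[𝕜] E}
    (h : BirkhoffJamesOrthogonal 𝕜 A R) {c : ℝ} (hc : 0 ≤ c) (hR : ∀ ξ, c * ‖ξ‖ ≤ ‖R ξ‖) :
    ‖A‖ ^ 2 + c ^ 2 ≤ ‖A + R‖ ^ 2 := by
  have hbound : ∀ t ∈ Set.Ioo (0 : ℝ) 1, ‖A‖ ^ 2 + (1 - t) * c ^ 2 ≤ ‖A + R‖ ^ 2 := by
    rintro t ⟨ht₀, ht₁⟩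
    have hmin := pow_le_pow_left₀ (norm_nonneg _) (h t) 2
    have hconv := A.sq_norm_add_ofReal_smul_le hc hR ht₀.le ht₁.le
    refine le_of_mul_le_mul_left ?_ ht₀
    linarith
  refine le_of_tendsto ?_ (eventually_of_mem (Ioo_mem_nhdsGT zero_lt_one) hbound)
  exact tendsto_nhdsWithin_of_tendsto_nhds (Continuous.tendsto' (by fun_prop) _ _ (by simp))

end InnerProduct

theorem existsUnique_pythagorean_translate_general
    {H : Type*} [NormedAddCommGroup H] [InnerProductSpace ℂ H] [Nontrivial H]
    (T S : H →L[ℂ] H) (m : ℝ) (hm : m = ⨅ ξ : {ξ : H // ‖ξ‖ = 1}, ‖S ξ.1‖) (hm' : 0 < m) :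
    ∃! γ : ℂ, ∀ lam : ℂ,
      ‖T + γ • S‖ ^ 2 + ‖lam‖ ^ 2 * m ^ 2 ≤ ‖(T + γ • S) + lam • S‖ ^ 2 := by
  have hS : ∀ ξ, m * ‖ξ‖ ≤ ‖S ξ‖ := hm ▸ iInf_norm_apply_mul_norm_le S
  have hS₀ : S ≠ 0 := by
    rintro rfl
    obtain ⟨ξ, hξ⟩ := exists_ne (0 : H)
    have hmξ := hS ξ
    rw [zero_apply, norm_zero] at hmξ
    exact (mul_pos hm' (norm_pos_iff.2 hξ)).not_ge hmξ
  have hpyth (γ : ℂ) (hγ : BirkhoffJamesOrthogonal ℂ (T + γ • S) S) (lam : ℂ) :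
      ‖T + γ • S‖ ^ 2 + ‖lam‖ ^ 2 * m ^ 2 ≤ ‖(T + γ • S) + lam • S‖ ^ 2 := by
    rw [← mul_pow]
    refine (hγ.smul_right lam).sq_norm_add_le (by positivity) fun ξ => ?_
    rw [smul_apply, norm_smul, mul_assoc]
    exact mul_le_mul_of_nonneg_left (hS ξ) (norm_nonneg lam)
  obtain ⟨γ₀, hγ₀⟩ := exists_birkhoffJamesOrthogonal_add_smul (𝕜 := ℂ) T hS₀
  exact ⟨γ₀, hpyth γ₀ hγ₀, fun γ hγ => eq_of_forall_sq_norm_add_smul_le hm'.ne' hγ (hpyth γ₀ hγ₀)⟩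

/-- For operators `T, S` on a nontrivial complex Hilbert space with `m(S) > 0`, where
`m(S) = inf {‖Sξ‖ : ‖ξ‖ = 1}`, there exists a unique `γ ∈ ℂ` such that
`‖(T + γS) + λS‖² ≥ ‖T + γS‖² + |λ|² m(S)²` for every `λ ∈ ℂ`. -/
theorem existsUnique_pythagorean_translate
    {H : Type*} [NormedAddCommGroup H] [InnerProductSpace ℂ H] [CompleteSpace H] [Nontrivial H]
    (T S : H →L[ℂ] H) (m : ℝ) (hm : m = ⨅ ξ : {ξ : H // ‖ξ‖ = 1}, ‖S ξ.1‖) (hm' : 0 < m) :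
    ∃! γ : ℂ, ∀ lam : ℂ,
      ‖T + γ • S‖ ^ 2 + ‖lam‖ ^ 2 * m ^ 2 ≤ ‖(T + γ • S) + lam • S‖ ^ 2 :=
  existsUnique_pythagorean_translate_general T S m hm hm'
end
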